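/- arXiv:1710.08467 — 2 statements merged into one kernel-verified Lean document; each statement's English description precedes it below -/
import Mathlib

section
/- Let Z be a nonnegative random variable with E[log(1+Z)] < ∞. Then E[log(1+Z)] = ∫₀^∞ (1 − e^{−s}) · E[e^{−s/Z}] / s ds, where on the event {Z = 0} the integrand contribution E[e^{−s/Z}] is interpreted as 0 (i.e., e^{−s/0} := 0). -/
/-!
For `z > 0`, Frullani's integral for `x ↦ e^{-x}` with `a = 1/z`, `b = 1 + 1/z` gives
`log (1 + z) = ∫₀^∞ (1 - e^{-s}) e^{-s/z} / s ds`; for `z = 0` both sides vanish. The integrand is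
nonnegative and, for `s > 0`, at most `1`, so it is integrable in `ω` for each `s`, and Tonelli's
theorem exchanges the expectation with the `ds`-integral.
-/

open MeasureTheory Real Set Filter Function Topology

section Tonelli

variable {α β : Type*} [MeasurableSpace α] [MeasurableSpace β] {μ : Measure α} {ν : Measure β}
  {f : α → β → ℝ}

theorem integral_integral_eq_toReal_lintegral_lintegral [SFinite ν]
    (hf : Measurable (uncurry f)) (hf₀ : ∀ a b, 0 ≤ f a b)
    (hfa : ∀ᵐ a ∂μ, Integrable (f a) ν) :
    ∫ a, ∫ b, f a b ∂ν ∂μ = (∫⁻ a, ∫⁻ b, ENNReal.ofReal (f a b) ∂ν ∂μ).toReal := by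
  rw [integral_eq_lintegral_of_nonneg_ae (ae_of_all _ fun a ↦ integral_nonneg (hf₀ a))
    hf.stronglyMeasurable.integral_prod_right'.aestronglyMeasurable]
  congr 1
  refine lintegral_congr_ae ?_
  filter_upwards [hfa] with a ha
  exact ofReal_integral_eq_lintegral_ofReal ha (ae_of_all _ (hf₀ a))

theorem integral_integral_swap_of_nonneg [SFinite μ] [SFinite ν]
    (hf : Measurable (uncurry f)) (hf₀ : ∀ a b, 0 ≤ f a b)
    (hfa : ∀ᵐ a ∂μ, Integrable (f a) ν) (hfb : ∀ᵐ b ∂ν, Integrable (fun a ↦ f a b) μ) :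
    ∫ a, ∫ b, f a b ∂ν ∂μ = ∫ b, ∫ a, f a b ∂μ ∂ν := by
  rw [integral_integral_eq_toReal_lintegral_lintegral hf hf₀ hfa,
    integral_integral_eq_toReal_lintegral_lintegral (f := fun b a ↦ f a b) (hf.comp measurable_swap)
      (fun b a ↦ hf₀ a b) hfb,
    lintegral_lintegral_swap (by fun_prop)]

end Tonelli

theorem one_sub_exp_neg_div_nonneg (s : ℝ) : 0 ≤ (1 - exp (-s)) / s := by
  rcases le_total 0 s with hs | hs
  · exact div_nonneg (by simpa using hs) hs
  · exact div_nonneg_of_nonpos (by simpa using hs) hs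

theorem one_sub_exp_neg_div_le_one {s : ℝ} (hs : 0 ≤ s) : (1 - exp (-s)) / s ≤ 1 :=
  div_le_one_of_le₀ (by linarith [add_one_le_exp (-s)]) hs

theorem integrableOn_one_sub_exp_neg_mul_exp_neg_div {z : ℝ} (hz : 0 < z) :
    IntegrableOn (fun s ↦ (1 - exp (-s)) * exp (-(s / z)) / s) (Ioi 0) := by
  refine (exp_neg_integrableOn_Ioi 0 (inv_pos.2 hz)).mono'
    (Measurable.aestronglyMeasurable (by fun_prop)) ?_
  filter_upwards [ae_restrict_mem measurableSet_Ioi] with s hs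
  rw [mul_div_right_comm, norm_mul, norm_of_nonneg (one_sub_exp_neg_div_nonneg s),
    norm_of_nonneg (exp_pos _).le, neg_mul, ← div_eq_inv_mul]
  exact mul_le_of_le_one_left (exp_pos _).le (one_sub_exp_neg_div_le_one (le_of_lt hs))

theorem integral_one_sub_exp_neg_mul_exp_neg_div {z : ℝ} (hz : 0 < z) :
    ∫ s in Ioi 0, (1 - exp (-s)) * exp (-(s / z)) / s = log (1 + z) := by
  have hform : ∀ s, s⁻¹ • (exp (-(z⁻¹ * s)) - exp (-((1 + z⁻¹) * s)))
      = (1 - exp (-s)) * exp (-(s / z)) / s := by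
    intro s
    rw [smul_eq_mul, add_mul, one_mul, neg_add, exp_add, div_eq_inv_mul s z]
    ring
  have hlog : (1 + z⁻¹) / z⁻¹ = 1 + z := by field_simp; ring
  have hcont : Continuous fun x : ℝ ↦ exp (-x) := by fun_prop
  have hzero : Tendsto (fun x ↦ exp (-x)) (𝓝[>] 0) (𝓝 1) := by
    simpa using (hcont.tendsto 0).mono_left nhdsWithin_le_nhds
  have h := Frullani.integral_Ioi_eq (b := 1 + z⁻¹) (hcont.locallyIntegrable.locallyIntegrableOn _)
    (inv_pos.2 hz) (by positivity) hzero tendsto_exp_neg_atTop_nhds_zero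
    (by simpa only [hform] using integrableOn_one_sub_exp_neg_mul_exp_neg_div hz)
  simpa only [hform, hlog, sub_zero, smul_eq_mul, mul_one] using h

noncomputable def shannonIntegrand (s x : ℝ) : ℝ :=
  (1 - exp (-s)) * (if 0 < x then exp (-(s / x)) else 0) / s

theorem measurable_shannonIntegrand : Measurable (uncurry shannonIntegrand) := by
  unfold shannonIntegrand
  refine Measurable.div (Measurable.mul (by fun_prop) ?_) measurable_fst
  exact Measurable.ite (measurableSet_lt measurable_const measurable_snd) (by fun_prop)
    measurable_const

theorem shannonIntegrand_nonneg (s x : ℝ) : 0 ≤ shannonIntegrand s x := by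
  rw [shannonIntegrand, mul_div_right_comm]
  refine mul_nonneg (one_sub_exp_neg_div_nonneg s) ?_
  split_ifs <;> positivity

theorem shannonIntegrand_le_one {s : ℝ} (hs : 0 ≤ s) (x : ℝ) : shannonIntegrand s x ≤ 1 := by
  rw [shannonIntegrand, mul_div_right_comm]
  refine mul_le_one₀ (one_sub_exp_neg_div_le_one hs) (by split_ifs <;> positivity) ?_
  split_ifs with hx
  · exact exp_le_one_iff.2 (neg_nonpos.2 (div_nonneg hs hx.le))
  · exact zero_le_one

theorem integrableOn_shannonIntegrand {x : ℝ} (hx : 0 ≤ x) :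
    IntegrableOn (fun s ↦ shannonIntegrand s x) (Ioi 0) := by
  rcases hx.lt_or_eq with hx | rfl
  · simpa only [shannonIntegrand, if_pos hx] using integrableOn_one_sub_exp_neg_mul_exp_neg_div hx
  · simp [shannonIntegrand]

theorem integral_shannonIntegrand {x : ℝ} (hx : 0 ≤ x) :
    ∫ s in Ioi 0, shannonIntegrand s x = log (1 + x) := by
  rcases hx.lt_or_eq with hx | rfl
  · simpa only [shannonIntegrand, if_pos hx] using integral_one_sub_exp_neg_mul_exp_neg_div hx
  · simp [shannonIntegrand]

theorem stmt8_general
    {Ω : Type*} [MeasurableSpace Ω] {μ : Measure Ω} [IsProbabilityMeasure μ]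
    (Z : Ω → ℝ) (hZmeas : Measurable Z) (hZnonneg : ∀ ω, 0 ≤ Z ω) :
    ∫ ω, Real.log (1 + Z ω) ∂μ
      = ∫ s in Set.Ioi (0:ℝ),
          (1 - Real.exp (-s)) * (∫ ω, (if 0 < Z ω then Real.exp (-(s / Z ω)) else 0) ∂μ) / s := by
  have hmeas : Measurable (uncurry fun s ω ↦ shannonIntegrand s (Z ω)) :=
    measurable_shannonIntegrand.comp (measurable_fst.prodMk (hZmeas.comp measurable_snd))
  have hint_ω : ∀ᵐ s ∂(volume.restrict (Ioi (0 : ℝ))),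
      Integrable (fun ω ↦ shannonIntegrand s (Z ω)) μ := by
    filter_upwards [ae_restrict_mem measurableSet_Ioi] with s hs
    exact Integrable.of_mem_Icc 0 1 (hmeas.comp measurable_prodMk_left).aemeasurable
      (ae_of_all _ fun ω ↦ ⟨shannonIntegrand_nonneg _ _, shannonIntegrand_le_one (le_of_lt hs) _⟩)
  calc ∫ ω, log (1 + Z ω) ∂μ = ∫ ω, (∫ s in Ioi 0, shannonIntegrand s (Z ω)) ∂μ := by
        simp only [integral_shannonIntegrand (hZnonneg _)]
    _ = ∫ s in Ioi 0, ∫ ω, shannonIntegrand s (Z ω) ∂μ :=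
        (integral_integral_swap_of_nonneg hmeas (fun _ _ ↦ shannonIntegrand_nonneg _ _) hint_ω
          (ae_of_all _ fun ω ↦ integrableOn_shannonIntegrand (hZnonneg ω))).symm
    _ = _ := by simp only [shannonIntegrand, integral_div, integral_const_mul]

/-- Shannon-transform integral identity: for a nonnegative random variable `Z`
with `E[log(1+Z)] < ∞`,
`E[log(1+Z)] = ∫₀^∞ (1 − e^{−s}) · E[e^{−s/Z}] / s ds`, where `e^{−s/Z} := 0` on `{Z = 0}`. -/
theorem stmt8
    {Ω : Type*} [MeasurableSpace Ω] {μ : Measure Ω} [IsProbabilityMeasure μ]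
    (Z : Ω → ℝ) (hZmeas : Measurable Z) (hZnonneg : ∀ ω, 0 ≤ Z ω)
    (hint : Integrable (fun ω => Real.log (1 + Z ω)) μ) :
    ∫ ω, Real.log (1 + Z ω) ∂μ
      = ∫ s in Set.Ioi (0:ℝ),
          (1 - Real.exp (-s)) * (∫ ω, (if 0 < Z ω then Real.exp (-(s / Z ω)) else 0) ∂μ) / s :=
  stmt8_general Z hZmeas hZnonneg
end

section
/- Let Z be a nonnegative random variable and H a nonnegative random variable independent of Z, with E[log(1 + H·Z)] < ∞. Then E[log(1 + H Z)] = ∫₀^∞ (1 − L_H(s)) · L_{1/Z}(s) / s ds, where L_H(s) = E[e^{−sH}] and L_{1/Z}(s) = E[e^{−s/Z}] (with e^{−s/0} := 0). -/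
/-!
For `h, z > 0` the integrand `(1 - e^{-sh}) e^{-s/z} / s` equals `(e^{-as} - e^{-bs}) / s` with
`a = 1/z` and `b = 1/z + h`, so Frullani's integral gives `log (b / a) = log (1 + h z)`.
Substituting `h = H ω`, `z = Z ω` and taking expectations, Tonelli's theorem exchanges the
expectation with the `ds` integral of this nonnegative integrand, and independence of `H` and `Z`
factors the inner expectation as `(1 - L_H(s)) L_{1/Z}(s) / s`.
-/

open MeasureTheory Real ProbabilityTheory Set Filter

lemma inv_mul_exp_neg_mul_sub_le {a b x : ℝ} (hx : 0 < x) :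
    x⁻¹ * (exp (-(a * x)) - exp (-(b * x))) ≤ (b - a) * exp (-(a * x)) := by
  have h : exp (-(a * x)) - exp (-(b * x)) = exp (-(a * x)) * (1 - exp (-((b - a) * x))) := by
    rw [mul_sub, mul_one, ← exp_add]
    ring_nf
  rw [h, inv_mul_le_iff₀ hx]
  calc exp (-(a * x)) * (1 - exp (-((b - a) * x))) ≤ exp (-(a * x)) * ((b - a) * x) :=
        mul_le_mul_of_nonneg_left (by linarith [add_one_le_exp (-((b - a) * x))])
          (exp_pos _).le
    _ = x * ((b - a) * exp (-(a * x))) := by ring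

lemma integrableOn_frullani_exp {a b : ℝ} (ha : 0 < a) (hab : a ≤ b) :
    IntegrableOn (fun x => x⁻¹ * (exp (-(a * x)) - exp (-(b * x)))) (Ioi 0) := by
  refine ((exp_neg_integrableOn_Ioi 0 ha).const_mul (b - a)).mono' (by fun_prop) ?_
  refine (ae_restrict_iff' measurableSet_Ioi).2 (Eventually.of_forall fun x (hx : 0 < x) => ?_)
  have h_nonneg : 0 ≤ x⁻¹ * (exp (-(a * x)) - exp (-(b * x))) := by
    have : exp (-(b * x)) ≤ exp (-(a * x)) := exp_le_exp.2 (by nlinarith)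
    exact mul_nonneg (inv_nonneg.2 hx.le) (sub_nonneg.2 this)
  rw [norm_of_nonneg h_nonneg, neg_mul]
  exact inv_mul_exp_neg_mul_sub_le hx

lemma integral_frullani_exp {a b : ℝ} (ha : 0 < a) (hab : a ≤ b) :
    ∫ x in Ioi 0, x⁻¹ * (exp (-(a * x)) - exp (-(b * x))) = log (b / a) := by
  have hcont : Continuous fun x : ℝ => exp (-x) := by fun_prop
  have := Frullani.integral_Ioi_eq (f := fun x => exp (-x)) (L := 1) (R := 0)
    (hcont.locallyIntegrable.locallyIntegrableOn _) ha (ha.trans_le hab) ?_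
    tendsto_exp_neg_atTop_nhds_zero (integrableOn_frullani_exp ha hab)
  · simpa using this
  · simpa using (hcont.tendsto 0).mono_left nhdsWithin_le_nhds

/-- The factor `if 0 < z then e^{-s/z} else 0` is the paper's `e^{-s/z}` with `e^{-s/0} := 0`. -/
noncomputable def shannonKernel (h z s : ℝ) : ℝ :=
  (1 - exp (-(s * h))) * (if 0 < z then exp (-(s / z)) else 0) / s

lemma Measurable.shannonKernel {α : Type*} [MeasurableSpace α] {f g k : α → ℝ}
    (hf : Measurable f) (hg : Measurable g) (hk : Measurable k) :
    Measurable fun x => shannonKernel (f x) (g x) (k x) := by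
  unfold _root_.shannonKernel
  refine Measurable.div (Measurable.mul (by fun_prop) ?_) hk
  exact Measurable.ite (measurableSet_lt measurable_const hg) (by fun_prop) measurable_const

lemma shannonKernel_nonneg {h z s : ℝ} (hh : 0 ≤ h) (hs : 0 ≤ s) : 0 ≤ shannonKernel h z s := by
  unfold shannonKernel
  have h_exp : exp (-(s * h)) ≤ 1 := exp_le_one_iff.2 (neg_nonpos.2 (mul_nonneg hs hh))
  refine div_nonneg (mul_nonneg (sub_nonneg.2 h_exp) ?_) hs
  split_ifs <;> positivity

lemma shannonKernel_le_inv {h z s : ℝ} (hs : 0 < s) : shannonKernel h z s ≤ s⁻¹ := by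
  unfold shannonKernel
  rw [div_eq_mul_inv]
  refine mul_le_of_le_one_left (inv_nonneg.2 hs.le) (mul_le_one₀ ?_ ?_ ?_)
  · linarith [exp_pos (-(s * h))]
  · split_ifs <;> positivity
  · split_ifs with hz
    · exact exp_le_one_iff.2 (neg_nonpos.2 (by positivity))
    · exact zero_le_one

lemma shannonKernel_eq_frullani {h z : ℝ} (hz : 0 < z) (s : ℝ) :
    shannonKernel h z s = s⁻¹ * (exp (-(z⁻¹ * s)) - exp (-((z⁻¹ + h) * s))) := by
  rw [shannonKernel, if_pos hz, div_eq_inv_mul, sub_mul, one_mul, ← exp_add]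
  ring_nf

lemma lintegral_shannonKernel {h z : ℝ} (hh : 0 ≤ h) (hz : 0 ≤ z) :
    ∫⁻ s in Ioi 0, ENNReal.ofReal (shannonKernel h z s) = ENNReal.ofReal (log (1 + h * z)) := by
  rcases hz.eq_or_lt with rfl | hz
  · simp [shannonKernel]
  have ha : 0 < z⁻¹ := inv_pos.2 hz
  have hab : z⁻¹ ≤ z⁻¹ + h := le_add_of_nonneg_right hh
  simp_rw [shannonKernel_eq_frullani hz]
  rw [← ofReal_integral_eq_lintegral_ofReal (integrableOn_frullani_exp ha hab),
    integral_frullani_exp ha hab]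
  · congr 2
    field_simp
  · refine (ae_restrict_iff' measurableSet_Ioi).2 (Eventually.of_forall fun s (hs : 0 < s) => ?_)
    simpa only [Pi.zero_apply, shannonKernel_eq_frullani hz] using
      shannonKernel_nonneg (z := z) hh hs.le

section Probability

variable {Ω : Type*} [MeasurableSpace Ω] {μ : Measure Ω} {H Z : Ω → ℝ}

lemma lintegral_ofReal_shannonKernel [IsFiniteMeasure μ] (hH : Measurable H) (hZ : Measurable Z)
    (hH0 : ∀ ω, 0 ≤ H ω) {s : ℝ} (hs : 0 < s) :
    ∫⁻ ω, ENNReal.ofReal (shannonKernel (H ω) (Z ω) s) ∂μ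
      = ENNReal.ofReal (∫ ω, shannonKernel (H ω) (Z ω) s ∂μ) := by
  have h_int : Integrable (fun ω => shannonKernel (H ω) (Z ω) s) μ := by
    refine .of_bound (hH.shannonKernel hZ measurable_const).aestronglyMeasurable s⁻¹
      (Eventually.of_forall fun ω => ?_)
    rw [norm_of_nonneg (shannonKernel_nonneg (hH0 ω) hs.le)]
    exact shannonKernel_le_inv hs
  exact (ofReal_integral_eq_lintegral_ofReal h_int
    (Eventually.of_forall fun ω => shannonKernel_nonneg (hH0 ω) hs.le)).symm

lemma integral_shannonKernel_of_indepFun [IsProbabilityMeasure μ] (hH : Measurable H)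
    (hZ : Measurable Z) (hH0 : ∀ ω, 0 ≤ H ω) (hindep : IndepFun H Z μ) {s : ℝ} (hs : 0 ≤ s) :
    ∫ ω, shannonKernel (H ω) (Z ω) s ∂μ
      = (1 - ∫ ω, exp (-(s * H ω)) ∂μ)
          * (∫ ω, (if 0 < Z ω then exp (-(s / Z ω)) else 0) ∂μ) / s := by
  have hf : Measurable fun x => 1 - exp (-(s * x)) := by fun_prop
  have hg : Measurable fun x => if 0 < x then exp (-(s / x)) else 0 :=
    Measurable.ite (measurableSet_lt measurable_const measurable_id) (by fun_prop) measurable_const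
  have h_exp : Integrable (fun ω => exp (-(s * H ω))) μ := by
    refine .of_bound (by fun_prop) 1 (Eventually.of_forall fun ω => ?_)
    rw [norm_of_nonneg (exp_pos _).le]
    exact exp_le_one_iff.2 (neg_nonpos.2 (mul_nonneg hs (hH0 ω)))
  have h_prod := (hindep.comp hf hg).integral_fun_mul_eq_mul_integral
    (hf.comp hH).aestronglyMeasurable (hg.comp hZ).aestronglyMeasurable
  simp only [Function.comp_apply] at h_prod
  simp only [shannonKernel]
  rw [integral_div, h_prod, integral_sub (integrable_const 1) h_exp, integral_const,
    probReal_univ, one_smul]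

end Probability

theorem stmt9_general
    {Ω : Type*} [MeasurableSpace Ω] {μ : Measure Ω} [IsProbabilityMeasure μ]
    (Z H : Ω → ℝ) (hZmeas : Measurable Z) (hHmeas : Measurable H)
    (hZnonneg : ∀ ω, 0 ≤ Z ω) (hHnonneg : ∀ ω, 0 ≤ H ω)
    (hindep : IndepFun H Z μ) :
    ∫ ω, Real.log (1 + H ω * Z ω) ∂μ
      = ∫ s in Set.Ioi (0:ℝ),
          (1 - ∫ ω, Real.exp (-(s * H ω)) ∂μ)
            * (∫ ω, (if 0 < Z ω then Real.exp (-(s / Z ω)) else 0) ∂μ) / s := by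
  have h_meas : Measurable fun p : Ω × ℝ => shannonKernel (H p.1) (Z p.1) p.2 :=
    (hHmeas.comp measurable_fst).shannonKernel (hZmeas.comp measurable_fst) measurable_snd
  have h_inner := fun s (hs : 0 < s) => lintegral_ofReal_shannonKernel (μ := μ) hHmeas hZmeas hHnonneg hs
  calc ∫ ω, log (1 + H ω * Z ω) ∂μ
      = (∫⁻ ω, ENNReal.ofReal (log (1 + H ω * Z ω)) ∂μ).toReal :=
        integral_eq_lintegral_of_nonneg_ae (Eventually.of_forall fun ω =>
          log_nonneg (le_add_of_nonneg_right (mul_nonneg (hHnonneg ω) (hZnonneg ω))))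
          (measurable_const.add (hHmeas.mul hZmeas)).log.aestronglyMeasurable
    _ = (∫⁻ ω, (∫⁻ s in Ioi 0, ENNReal.ofReal (shannonKernel (H ω) (Z ω) s)) ∂μ).toReal := by
        simp_rw [lintegral_shannonKernel (hHnonneg _) (hZnonneg _)]
    _ = (∫⁻ s in Ioi 0, ∫⁻ ω, ENNReal.ofReal (shannonKernel (H ω) (Z ω) s) ∂μ).toReal := by
        rw [lintegral_lintegral_swap h_meas.ennreal_ofReal.aemeasurable]
    _ = ∫ s in Ioi 0, (∫⁻ ω, ENNReal.ofReal (shannonKernel (H ω) (Z ω) s) ∂μ).toReal := by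
        refine (integral_toReal h_meas.ennreal_ofReal.lintegral_prod_left'.aemeasurable ?_).symm
        exact (ae_restrict_iff' measurableSet_Ioi).2
          (Eventually.of_forall fun s hs => h_inner s hs ▸ ENNReal.ofReal_lt_top)
    _ = _ := setIntegral_congr_fun measurableSet_Ioi fun s (hs : 0 < s) => by
        rw [h_inner s hs, ENNReal.toReal_ofReal (integral_nonneg fun ω =>
          shannonKernel_nonneg (hHnonneg ω) hs.le),
          integral_shannonKernel_of_indepFun hHmeas hZmeas hHnonneg hindep hs.le]

/-- General Shannon-transform identity: for nonnegative independent random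
variables `Z` and `H` with `E[log(1+H·Z)] < ∞`,
`E[log(1 + H Z)] = ∫₀^∞ (1 − L_H(s)) · L_{1/Z}(s) / s ds`, where `L_H(s) = E[e^{−sH}]`
and `L_{1/Z}(s) = E[e^{−s/Z}]` with `e^{−s/0} := 0`. -/
theorem stmt9
    {Ω : Type*} [MeasurableSpace Ω] {μ : Measure Ω} [IsProbabilityMeasure μ]
    (Z H : Ω → ℝ) (hZmeas : Measurable Z) (hHmeas : Measurable H)
    (hZnonneg : ∀ ω, 0 ≤ Z ω) (hHnonneg : ∀ ω, 0 ≤ H ω)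
    (hindep : IndepFun H Z μ)
    (hint : Integrable (fun ω => Real.log (1 + H ω * Z ω)) μ) :
    ∫ ω, Real.log (1 + H ω * Z ω) ∂μ
      = ∫ s in Set.Ioi (0:ℝ),
          (1 - ∫ ω, Real.exp (-(s * H ω)) ∂μ)
            * (∫ ω, (if 0 < Z ω then Real.exp (-(s / Z ω)) else 0) ∂μ) / s :=
  stmt9_general Z H hZmeas hHmeas hZnonneg hHnonneg hindep
end
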